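/- arXiv:2402.18648 — 2 statements merged into one kernel-verified Lean document; each statement's English description precedes it below -/
import Mathlib

section
/- Let S₀^ε be the set of pure tripartite states |φ⟩_{RMM'} (R a qubit) for which measurements on M and on M' each predict the computational-basis measurement outcome of R with probability ≥ 1-ε, and S₁^ε the analogous set for the Hadamard basis. If ε < 0.11 then S₀^ε ∩ S₁^ε = ∅. -/
open scoped Classical ComplexOrder

noncomputable def binEnt (x : ℝ) : ℝ := -x * Real.logb 2 x - (1 - x) * Real.logb 2 (1 - x)

/-- von Neumann entropy (base 2) of a matrix, via eigenvalues (0 if not Hermitian). -/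
noncomputable def vnEnt {d : Type*} [Fintype d] [DecidableEq d] (ρ : Matrix d d ℂ) : ℝ :=
  if h : ρ.IsHermitian then ∑ i, -(h.eigenvalues i) * Real.logb 2 (h.eigenvalues i) else 0

/-- Trace norm of a Hermitian matrix (0 if not Hermitian). -/
noncomputable def traceNorm {d : Type*} [Fintype d] [DecidableEq d] (A : Matrix d d ℂ) : ℝ :=
  if h : A.IsHermitian then ∑ i, |h.eigenvalues i| else 0

/-- the square root `Matrix.PosSemidef.sqrt` of the older Mathlib, spelled out -/
noncomputable def psdSqrt {d : Type*} [Fintype d] [DecidableEq d] {A : Matrix d d ℂ}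
    (hA : A.PosSemidef) : Matrix d d ℂ :=
  hA.1.eigenvectorUnitary.1 * Matrix.diagonal ((fun x : ℝ => (x : ℂ)) ∘ Real.sqrt ∘ hA.1.eigenvalues) *
    (star hA.1.eigenvectorUnitary : Matrix d d ℂ)

noncomputable def fidelity {d : Type*} [Fintype d] [DecidableEq d] (ρ σ : Matrix d d ℂ) : ℝ :=
  if hσ : σ.PosSemidef then
    if h : (psdSqrt hσ * ρ * psdSqrt hσ).IsHermitian then ∑ i, Real.sqrt (h.eigenvalues i) else 0
  else 0

noncomputable def pdist {d : Type*} [Fintype d] [DecidableEq d] (ρ σ : Matrix d d ℂ) : ℝ :=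
  Real.sqrt (1 - (fidelity ρ σ) ^ 2)

def IsState {d : Type*} [Fintype d] [DecidableEq d] (ρ : Matrix d d ℂ) : Prop :=
  ρ.PosSemidef ∧ ρ.trace = 1

/-- partial trace over the second tensor factor -/
noncomputable def ptraceR {a b : Type*} [Fintype b] (ρ : Matrix (a × b) (a × b) ℂ) : Matrix a a ℂ :=
  fun i j => ∑ k, ρ (i, k) (j, k)

/-- partial trace over the first tensor factor -/
noncomputable def ptraceL {a b : Type*} [Fintype a] (ρ : Matrix (a × b) (a × b) ℂ) : Matrix b b ℂ :=
  fun i j => ∑ k, ρ (k, i) (k, j)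

/-- conditional von Neumann entropy H(A|B) of a state on A × B -/
noncomputable def condEnt {a b : Type*} [Fintype a] [Fintype b] [DecidableEq a] [DecidableEq b]
    (ρ : Matrix (a × b) (a × b) ℂ) : ℝ := vnEnt ρ - vnEnt (ptraceL ρ)

/-- computational-basis projector on a qubit -/
noncomputable def Pc (b : Fin 2) : Matrix (Fin 2) (Fin 2) ℂ := fun i j => if i = b ∧ j = b then 1 else 0

/-- Hadamard-basis projector on a qubit -/
noncomputable def Ph (b : Fin 2) : Matrix (Fin 2) (Fin 2) ℂ :=
  fun i j => (1 / 2 : ℂ) * (-1) ^ ((i : ℕ) * (b : ℕ)) * (-1) ^ ((b : ℕ) * (j : ℕ))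

/-- measure the first (qubit) factor with rank-one projectors `P`, storing the outcome
classically in its place -/
noncomputable def cqMeasure {m : Type*} [Fintype m] (P : Fin 2 → Matrix (Fin 2) (Fin 2) ℂ)
    (ρ : Matrix (Fin 2 × m) (Fin 2 × m) ℂ) : Matrix (Fin 2 × m) (Fin 2 × m) ℂ :=
  fun zi z'j => if zi.1 = z'j.1 then ∑ r, ∑ t, (P zi.1) r t * ρ (t, zi.2) (r, z'j.2) else 0

/-- outer product |ψ⟩⟨ψ| of a vector -/
noncomputable def outer {d : Type*} (ψ : d → ℂ) : Matrix d d ℂ := fun i j => ψ i * (starRingEnd ℂ) (ψ j)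

/-- trace out the third subsystem -/
noncomputable def trThird {dE dF : ℕ} (ρ : Matrix (Fin 2 × Fin dE × Fin dF) (Fin 2 × Fin dE × Fin dF) ℂ) :
    Matrix (Fin 2 × Fin dE) (Fin 2 × Fin dE) ℂ :=
  fun p q => ∑ f, ρ (p.1, p.2, f) (q.1, q.2, f)

/-- trace out the second subsystem -/
noncomputable def trSecond {dE dF : ℕ} (ρ : Matrix (Fin 2 × Fin dE × Fin dF) (Fin 2 × Fin dE × Fin dF) ℂ) :
    Matrix (Fin 2 × Fin dF) (Fin 2 × Fin dF) ℂ :=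
  fun p q => ∑ e, ρ (p.1, e, p.2) (q.1, e, q.2)

open Kronecker in
/-- probability that local measurements `{O b}` (acting on `M ⊗ M'`) reproduce the outcome of
the rank-one measurement `{R b}` on the qubit `R` of the pure state `ψ` on `R ⊗ M ⊗ M'`. -/
noncomputable def guessProb {dM dM' : ℕ} (R : Fin 2 → Matrix (Fin 2) (Fin 2) ℂ)
    (O : Fin 2 → Matrix (Fin dM × Fin dM') (Fin dM × Fin dM') ℂ)
    (ψ : Fin 2 × Fin dM × Fin dM' → ℂ) : ℝ :=
  (∑ b, ((R b ⊗ₖ O b) * outer ψ).trace).re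

open Kronecker in
/-- the set of normalized pure states on `R ⊗ M ⊗ M'` for which a measurement on `M` and a
measurement on `M'` each predict, with probability at least `1 - ε`, the outcome of measuring
the qubit `R` with the rank-one basis measurement `{R b}`. -/
def predSet {dM dM' : ℕ} (R : Fin 2 → Matrix (Fin 2) (Fin 2) ℂ) (ε : ℝ) :
    Set (Fin 2 × Fin dM × Fin dM' → ℂ) :=
  {ψ | (∑ p, ‖ψ p‖ ^ 2 = 1) ∧
    (∃ Λ : Fin 2 → Matrix (Fin dM) (Fin dM) ℂ, (∀ b, (Λ b).PosSemidef) ∧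
      Λ 0 + Λ 1 = 1 ∧ 1 - ε ≤ guessProb R (fun b => Λ b ⊗ₖ (1 : Matrix (Fin dM') (Fin dM') ℂ)) ψ) ∧
    (∃ Λ' : Fin 2 → Matrix (Fin dM') (Fin dM') ℂ, (∀ b, (Λ' b).PosSemidef) ∧
      Λ' 0 + Λ' 1 = 1 ∧ 1 - ε ≤ guessProb R (fun b => (1 : Matrix (Fin dM) (Fin dM) ℂ) ⊗ₖ Λ' b) ψ)}

/-! The computational and Hadamard basis vectors of a qubit have overlap `1/√2`, so every sum
`Pc a + Ph b` of one projector from each basis has eigenvalues `1 ± 1/√2` and is bounded by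
`(1 + 1/√2) • 1` in the Loewner order. Refining the measurement `Λ` on `M` and `Λ'` on `M'` into
the joint measurement `Λ a ⊗ Λ' b` on `M ⊗ M'`, the two guessing probabilities add up to the
expectation of `∑ a b, (Pc a + Ph b) ⊗ Λ a ⊗ Λ' b ≤ (1 + 1/√2) • 1`, so `p_Z(M) + p_X(M') ≤ 1 + 1/√2`
(monogamy of the two predictions). A state in both sets would have `p_Z(M) + p_X(M') ≥ 2 - 2ε`,
which exceeds `1 + 1/√2` as soon as `ε < (1 - 1/√2)/2 ≈ 0.146`. -/

open Matrix
open scoped MatrixOrder Kronecker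

lemma quadratic_nonneg_of_sq_le_mul {p q r : ℝ} (hp : 0 ≤ p) (hq : 0 ≤ q) (h : r ^ 2 ≤ p * q)
    (x y : ℝ) : 0 ≤ p * x ^ 2 + 2 * r * x * y + q * y ^ 2 := by
  rcases hp.eq_or_lt with rfl | hp
  · obtain rfl : r = 0 := by nlinarith
    nlinarith [mul_nonneg hq (sq_nonneg y)]
  · refine nonneg_of_mul_nonneg_right ?_ hp
    nlinarith [sq_nonneg (p * x + r * y), sq_nonneg y]

lemma Matrix.posSemidef_fin_two_of_sq_le_mul {p q r : ℝ} (hp : 0 ≤ p) (hq : 0 ≤ q)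
    (h : r ^ 2 ≤ p * q) : (!![(p : ℂ), r; r, q]).PosSemidef := by
  refine .of_dotProduct_mulVec_nonneg ?_ fun x => ?_
  · ext i j; fin_cases i <;> fin_cases j <;> simp
  · simp only [dotProduct, Pi.star_apply, RCLike.star_def, mulVec, of_apply, cons_val',
      cons_val_fin_one, Fin.sum_univ_two, Fin.isValue, cons_val_zero, cons_val_one,
      Complex.nonneg_iff, Complex.add_re, Complex.mul_re, Complex.conj_re, Complex.ofReal_re,
      Complex.ofReal_im, zero_mul, sub_zero, Complex.conj_im, Complex.add_im, Complex.mul_im,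
      add_zero, neg_mul, sub_neg_eq_add]
    constructor
    · have hre := quadratic_nonneg_of_sq_le_mul hp hq h (x 0).re (x 1).re
      have him := quadratic_nonneg_of_sq_le_mul hp hq h (x 0).im (x 1).im
      nlinarith
    · ring

section Kronecker

variable {𝕜 : Type*} [RCLike 𝕜] {l m n p : Type*}

lemma Matrix.kronecker_sum {ι : Type*} (A : Matrix l m 𝕜) (s : Finset ι)
    (B : ι → Matrix n p 𝕜) : A ⊗ₖ (∑ i ∈ s, B i) = ∑ i ∈ s, A ⊗ₖ B i :=
  map_sum (kroneckerBilinear (R := 𝕜) A) B s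

lemma Matrix.sum_kronecker {ι : Type*} (s : Finset ι) (A : ι → Matrix l m 𝕜)
    (B : Matrix n p 𝕜) : (∑ i ∈ s, A i) ⊗ₖ B = ∑ i ∈ s, A i ⊗ₖ B :=
  map_sum ((kroneckerBilinear (R := 𝕜)).flip B) A s

lemma Matrix.sub_kronecker (A B : Matrix l m 𝕜) (C : Matrix n p 𝕜) :
    (A - B) ⊗ₖ C = A ⊗ₖ C - B ⊗ₖ C :=
  (kroneckerBilinear (R := 𝕜)).map_sub₂ A B C

lemma Matrix.kronecker_le_kronecker_left [Finite l] [Finite m] {A B : Matrix l l 𝕜}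
    {C : Matrix m m 𝕜} (h : A ≤ B) (hC : C.PosSemidef) : A ⊗ₖ C ≤ B ⊗ₖ C := by
  rw [le_iff, ← sub_kronecker]
  exact h.kronecker hC

end Kronecker

lemma sum_kronecker_add_sum_kronecker_le {𝕜 : Type*} [RCLike 𝕜] {n m m' ι κ : Type*}
    [Fintype n] [DecidableEq n] [Fintype m] [DecidableEq m] [Fintype m'] [DecidableEq m']
    [Fintype ι] [Fintype κ] {R : ι → Matrix n n 𝕜} {S : κ → Matrix n n 𝕜} {c : ℝ}
    (hRS : ∀ a b, R a + S b ≤ c • (1 : Matrix n n 𝕜))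
    {Λ : ι → Matrix m m 𝕜} (hΛ : ∀ a, (Λ a).PosSemidef) (hΛ1 : ∑ a, Λ a = 1)
    {Λ' : κ → Matrix m' m' 𝕜} (hΛ' : ∀ b, (Λ' b).PosSemidef) (hΛ'1 : ∑ b, Λ' b = 1) :
    ∑ a, R a ⊗ₖ (Λ a ⊗ₖ 1) + ∑ b, S b ⊗ₖ (1 ⊗ₖ Λ' b) ≤ c • (1 : Matrix (n × m × m') _ 𝕜) := by
  have hsplit : ∑ a, R a ⊗ₖ (Λ a ⊗ₖ 1) + ∑ b, S b ⊗ₖ (1 ⊗ₖ Λ' b)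
      = ∑ a, ∑ b, (R a + S b) ⊗ₖ (Λ a ⊗ₖ Λ' b) := by
    simp only [← hΛ1, ← hΛ'1, kronecker_sum, sum_kronecker, add_kronecker,
      Finset.sum_add_distrib]
    rw [Finset.sum_comm (γ := κ)]
  have hone : c • (1 : Matrix (n × m × m') _ 𝕜)
      = ∑ a, ∑ b, (c • 1 : Matrix n n 𝕜) ⊗ₖ (Λ a ⊗ₖ Λ' b) := calc
    _ = (c • 1 : Matrix n n 𝕜) ⊗ₖ ((∑ a, Λ a) ⊗ₖ ∑ b, Λ' b) := by
      rw [hΛ1, hΛ'1, one_kronecker_one, smul_kronecker, one_kronecker_one]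
    _ = _ := by simp only [kronecker_sum, sum_kronecker]; exact Finset.sum_comm
  rw [hsplit, hone]
  exact Finset.sum_le_sum fun a _ => Finset.sum_le_sum fun b _ =>
    kronecker_le_kronecker_left (hRS a b) ((hΛ a).kronecker (hΛ' b))

lemma Pc_add_Ph_le (a b : Fin 2) :
    Pc a + Ph b ≤ (1 + (√2)⁻¹ : ℝ) • (1 : Matrix (Fin 2) (Fin 2) ℂ) := by
  set σ : ℝ := (-1) ^ (a : ℕ)
  set s : ℝ := (-1) ^ (b : ℕ)
  have hσ : σ ^ 2 = 1 := by simp [σ, ← pow_mul]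
  have hs : s ^ 2 = 1 := by simp [s, ← pow_mul]
  have hsqrt : (√2)⁻¹ ^ 2 = 1 / 2 := by simp
  have hentries : (1 + (√2)⁻¹ : ℝ) • 1 - (Pc a + Ph b) =
      !![(((√2)⁻¹ - σ / 2 : ℝ) : ℂ), (-s / 2 : ℝ); (-s / 2 : ℝ), ((√2)⁻¹ + σ / 2 : ℝ)] := by
    ext i j
    fin_cases a <;> fin_cases b <;> fin_cases i <;> fin_cases j <;> simp [σ, s, Pc, Ph] <;> ring
  rw [le_iff, hentries]
  refine posSemidef_fin_two_of_sq_le_mul ?_ ?_ ?_ <;>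
    nlinarith [inv_nonneg.2 (Real.sqrt_nonneg 2)]

lemma trace_mul_outer {d : Type*} [Fintype d] (A : Matrix d d ℂ) (ψ : d → ℂ) :
    (A * outer ψ).trace = star ψ ⬝ᵥ A *ᵥ ψ := by
  rw [show outer ψ = vecMulVec ψ (star ψ) from rfl, mul_vecMulVec, trace_vecMulVec,
    dotProduct_comm]

lemma guessProb_eq {dM dM' : ℕ} (R : Fin 2 → Matrix (Fin 2) (Fin 2) ℂ)
    (O : Fin 2 → Matrix (Fin dM × Fin dM') (Fin dM × Fin dM') ℂ)
    (ψ : Fin 2 × Fin dM × Fin dM' → ℂ) :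
    guessProb R O ψ = (star ψ ⬝ᵥ (∑ b, R b ⊗ₖ O b) *ᵥ ψ).re := by
  rw [guessProb, ← trace_mul_outer, Finset.sum_mul, trace_sum]

lemma re_star_dotProduct_mulVec_le {d : Type*} [Fintype d] {A B : Matrix d d ℂ} (h : A ≤ B)
    (ψ : d → ℂ) : (star ψ ⬝ᵥ A *ᵥ ψ).re ≤ (star ψ ⬝ᵥ B *ᵥ ψ).re := by
  have hq := (le_iff.1 h).dotProduct_mulVec_nonneg ψ
  rw [sub_mulVec, dotProduct_sub] at hq
  exact sub_nonneg.1 (Complex.nonneg_iff.1 hq).1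

lemma re_star_dotProduct_self {d : Type*} [Fintype d] (ψ : d → ℂ) :
    (star ψ ⬝ᵥ ψ).re = ∑ p, ‖ψ p‖ ^ 2 := by
  simp [dotProduct, Complex.re_sum, ← Complex.normSq_eq_norm_sq, Complex.normSq_apply]

theorem guessProb_add_guessProb_le {dM dM' : ℕ} {R S : Fin 2 → Matrix (Fin 2) (Fin 2) ℂ}
    {c : ℝ} (hRS : ∀ a b, R a + S b ≤ c • (1 : Matrix (Fin 2) (Fin 2) ℂ))
    {ψ : Fin 2 × Fin dM × Fin dM' → ℂ} (hψ : ∑ p, ‖ψ p‖ ^ 2 = 1)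
    {Λ : Fin 2 → Matrix (Fin dM) (Fin dM) ℂ} (hΛ : ∀ a, (Λ a).PosSemidef) (hΛ1 : Λ 0 + Λ 1 = 1)
    {Λ' : Fin 2 → Matrix (Fin dM') (Fin dM') ℂ} (hΛ' : ∀ b, (Λ' b).PosSemidef)
    (hΛ'1 : Λ' 0 + Λ' 1 = 1) :
    guessProb R (fun a => Λ a ⊗ₖ 1) ψ + guessProb S (fun b => 1 ⊗ₖ Λ' b) ψ ≤ c := by
  have hle := sum_kronecker_add_sum_kronecker_le hRS hΛ (by rwa [Fin.sum_univ_two]) hΛ'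
    (by rwa [Fin.sum_univ_two])
  calc _ = (star ψ ⬝ᵥ (∑ a, R a ⊗ₖ (Λ a ⊗ₖ 1) + ∑ b, S b ⊗ₖ (1 ⊗ₖ Λ' b)) *ᵥ ψ).re := by
        rw [guessProb_eq, guessProb_eq, add_mulVec, dotProduct_add, Complex.add_re]
    _ ≤ (star ψ ⬝ᵥ (c • 1 : Matrix _ _ ℂ) *ᵥ ψ).re := re_star_dotProduct_mulVec_le hle ψ
    _ = c := by
      rw [smul_mulVec, one_mulVec, dotProduct_smul, Complex.real_smul, Complex.re_ofReal_mul,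
        re_star_dotProduct_self, hψ, mul_one]

/-- for `ε < 0.11` the sets `S₀^ε` and `S₁^ε` are disjoint. -/
theorem S0_inter_S1_empty (dM dM' : ℕ) (ε : ℝ) (hε : ε < 0.11) :
    (predSet (dM := dM) (dM' := dM') Pc ε) ∩ (predSet Ph ε) = ∅ := by
  refine Set.eq_empty_of_forall_notMem ?_
  rintro ψ ⟨⟨hψ, ⟨Λ, hΛ, hΛ1, hZ⟩, -⟩, -, -, ⟨Λ', hΛ', hΛ'1, hX⟩⟩
  have hsum := guessProb_add_guessProb_le Pc_add_Ph_le hψ hΛ hΛ1 hΛ' hΛ'1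
  have hsqrt : (√2)⁻¹ < 0.78 := by
    rw [inv_lt_comm₀ (by positivity) (by norm_num), Real.lt_sqrt (by norm_num)]
    norm_num
  linarith
end

section
/- With the permutations A = (1 3)(2 4), B = (3 5)(4 6), F = (5 6) on {1,...,6} and Sᵢ = A^{xᵢ}·B^{yᵢ}·F·B^{yᵢ}·A^{xᵢ} for bit strings x, y ∈ {0,1}ⁿ, the restriction of each Sᵢ to {1,2} is a transposition iff xᵢ·yᵢ = 1; consequently, starting from position 1 and applying S₁,...,Sₙ in sequence (where each Sᵢ acts on {1,2} of a fresh block), the final position is 1 if Σᵢ xᵢyᵢ ≡ 0 (mod 2) and 2 otherwise. -/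
/-- the permutation `A = (1 3)(2 4)` of `{1,…,6}`, on `Fin 6` (0-indexed). -/
def permA : Equiv.Perm (Fin 6) := Equiv.swap 0 2 * Equiv.swap 1 3
/-- the permutation `B = (3 5)(4 6)` of `{1,…,6}`, on `Fin 6` (0-indexed). -/
def permB : Equiv.Perm (Fin 6) := Equiv.swap 2 4 * Equiv.swap 3 5
/-- the permutation `F = (5 6)` of `{1,…,6}`, on `Fin 6` (0-indexed). -/
def permF : Equiv.Perm (Fin 6) := Equiv.swap 4 5

/-- `Sᵢ = A^{xᵢ} B^{yᵢ} F B^{yᵢ} A^{xᵢ}` -/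
def permS (x y : Bool) : Equiv.Perm (Fin 6) :=
  (if x then permA else 1) * (if y then permB else 1) * permF *
    (if y then permB else 1) * (if x then permA else 1)

lemma permS_case (x y : Bool) :
    if x && y then permS x y 0 = 1 ∧ permS x y 1 = 0
    else permS x y 0 = 0 ∧ permS x y 1 = 1 := by
  cases x <;> cases y <;> simp [permS, permA, permB, permF] <;> decide

lemma aux (n : ℕ) (x y : Fin n → Bool) (l : List (Fin n)) (p : Fin 6) (hp : p = 0 ∨ p = 1) :
    l.foldl (fun p i => permS (x i) (y i) p) p =
      if ((l.map (fun i => if x i && y i then 1 else 0)).sum +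
          (if p = 0 then 0 else 1)) % 2 = 0 then (0 : Fin 6) else 1 := by
  induction l generalizing p with
  | nil => rcases hp with h | h <;> subst h <;> simp
  | cons a t ih =>
    have h := permS_case (x a) (y a)
    by_cases hxy : (x a && y a) = true
    · rw [if_pos hxy] at h
      rcases hp with h0 | h0 <;> subst h0 <;>
        simp only [List.foldl_cons, h.1, h.2, List.map_cons, List.sum_cons, hxy, if_true]
      · rw [ih 1 (Or.inr rfl)]
        split_ifs <;> simp_all <;> omega
      · rw [ih 0 (Or.inl rfl)]
        split_ifs <;> simp_all <;> omega
    · rw [if_neg hxy] at h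
      rcases hp with h0 | h0 <;> subst h0 <;>
        simp only [List.foldl_cons, h.1, h.2, List.map_cons, List.sum_cons, hxy, if_false]
      · rw [ih 0 (Or.inl rfl)]
        simp
      · rw [ih 1 (Or.inr rfl)]
        simp

/-- each `Sᵢ` acts on `{1,2}` (here `{0,1} ⊆ Fin 6`) as the transposition iff
`xᵢ·yᵢ = 1` and as the identity otherwise; consequently, starting from position 1 and applying
`S₁, …, Sₙ` in sequence, the final position is 1 if `Σᵢ xᵢyᵢ ≡ 0 (mod 2)` and 2 otherwise. -/
theorem gardenHose_inner_product (n : ℕ) (x y : Fin n → Bool) :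
    (∀ i, if x i && y i then permS (x i) (y i) 0 = 1 ∧ permS (x i) (y i) 1 = 0
          else permS (x i) (y i) 0 = 0 ∧ permS (x i) (y i) 1 = 1) ∧
    (List.finRange n).foldl (fun p i => permS (x i) (y i) p) 0 =
      (if (∑ i, (if x i && y i then 1 else 0) : ℕ) % 2 = 0 then (0 : Fin 6) else 1) := by
  refine ⟨fun i => permS_case (x i) (y i), ?_⟩
  rw [aux n x y _ 0 (Or.inl rfl), Fin.sum_univ_def]
  simp
end
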